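/- Suppose for each i = 1,2, w_i is the minimizer over a closed convex set A of the functional w ↦ ‖L w - f_i‖² + ε‖w‖², where L is bounded linear between Hilbert spaces and ε > 0. Then ‖L(w₁ - w₂)‖² + 2ε‖w₁ - w₂‖² ≤ ‖f₁ - f₂‖². -/
import Mathlib

open RealInnerProductSpace

lemma var_ineq_aux
    {H K : Type*} [NormedAddCommGroup H] [InnerProductSpace ℝ H]
    [NormedAddCommGroup K] [InnerProductSpace ℝ K]
    (A : Set H) (hAconv : Convex ℝ A)
    (L : H →L[ℝ] K) (f : K) (ε : ℝ) (hε : 0 < ε)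
    (w : H) (hw : w ∈ A)
    (hmin : IsMinOn (fun w => ‖L w - f‖ ^ 2 + ε * ‖w‖ ^ 2) A w)
    (z : H) (hz : z ∈ A) :
    0 ≤ ⟪L w - f, L (z - w)⟫ + ε * ⟪w, z - w⟫ := by
  set d := z - w with hd
  set S := ⟪L w - f, L d⟫ + ε * ⟪w, d⟫ with hS
  set C := ‖L d‖ ^ 2 + ε * ‖d‖ ^ 2 with hC
  have hC0 : 0 ≤ C := by positivity
  have key : ∀ t : ℝ, 0 < t → t ≤ 1 → 0 ≤ 2 * S + t * C := by
    intro t ht ht1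
    have hmem : w + t • d ∈ A := hAconv.add_smul_sub_mem hw hz ⟨ht.le, ht1⟩
    have h := hmin hmem
    simp only [Set.mem_setOf_eq] at h
    have e1 : ‖L (w + t • d) - f‖ ^ 2
        = ‖L w - f‖ ^ 2 + 2 * (t * ⟪L w - f, L d⟫) + t ^ 2 * ‖L d‖ ^ 2 := by
      have : L (w + t • d) - f = (L w - f) + t • (L d) := by
        simp [map_add, map_smul]; abel
      rw [this, norm_add_sq_real, real_inner_smul_right, norm_smul]
      simp [abs_of_pos ht]
      ring
    have e2 : ‖w + t • d‖ ^ 2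
        = ‖w‖ ^ 2 + 2 * (t * ⟪w, d⟫) + t ^ 2 * ‖d‖ ^ 2 := by
      rw [norm_add_sq_real, real_inner_smul_right, norm_smul]
      simp [abs_of_pos ht]
      ring
    rw [e1, e2] at h
    have ht2 : t ^ 2 = t * t := sq t
    nlinarith [mul_pos ht ht]
  have h2S : 0 ≤ 2 * S := by
    refine le_of_forall_pos_le_add ?_
    intro δ hδ
    have htpos : 0 < min 1 (δ / (C + 1)) := by
      apply lt_min one_pos
      positivity
    have h := key (min 1 (δ / (C + 1))) htpos (min_le_left _ _)
    have : min 1 (δ / (C + 1)) * C ≤ δ := by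
      calc min 1 (δ / (C + 1)) * C ≤ (δ / (C + 1)) * C := by
            apply mul_le_mul_of_nonneg_right (min_le_right _ _) hC0
        _ ≤ δ := by
            rw [div_mul_eq_mul_div, div_le_iff₀ (by linarith)]
            nlinarith
    linarith
  linarith

theorem two_minimizers_stability
    {H K : Type*} [NormedAddCommGroup H] [InnerProductSpace ℝ H] [CompleteSpace H]
    [NormedAddCommGroup K] [InnerProductSpace ℝ K] [CompleteSpace K]
    (A : Set H) (hA : A.Nonempty) (hAc : IsClosed A) (hAconv : Convex ℝ A)
    (L : H →L[ℝ] K) (f₁ f₂ : K) (ε : ℝ) (hε : 0 < ε)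
    (w₁ w₂ : H) (hw₁ : w₁ ∈ A) (hw₂ : w₂ ∈ A)
    (hmin₁ : IsMinOn (fun w => ‖L w - f₁‖ ^ 2 + ε * ‖w‖ ^ 2) A w₁)
    (hmin₂ : IsMinOn (fun w => ‖L w - f₂‖ ^ 2 + ε * ‖w‖ ^ 2) A w₂) :
    ‖L (w₁ - w₂)‖ ^ 2 + 2 * ε * ‖w₁ - w₂‖ ^ 2 ≤ ‖f₁ - f₂‖ ^ 2 := by
  have h₁ := var_ineq_aux A hAconv L f₁ ε hε w₁ hw₁ hmin₁ w₂ hw₂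
  have h₂ := var_ineq_aux A hAconv L f₂ ε hε w₂ hw₂ hmin₂ w₁ hw₁
  have hcs := real_inner_le_norm (f₁ - f₂) (L (w₁ - w₂))
  have e0 : L (w₂ - w₁) = -(L (w₁ - w₂)) := by rw [← map_neg]; congr 1; abel
  rw [e0, inner_neg_right] at h₁
  have e1 : w₂ - w₁ = -(w₁ - w₂) := by abel
  rw [e1, inner_neg_right] at h₁
  have hself : ⟪L (w₁ - w₂), L (w₁ - w₂)⟫ = ‖L (w₁ - w₂)‖ ^ 2 :=
    real_inner_self_eq_norm_sq _
  have hselfw : ⟪w₁ - w₂, w₁ - w₂⟫ = ‖w₁ - w₂‖ ^ 2 := real_inner_self_eq_norm_sq _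
  have hsum : ‖L (w₁ - w₂)‖ ^ 2 + ε * ‖w₁ - w₂‖ ^ 2 ≤ ⟪f₁ - f₂, L (w₁ - w₂)⟫ := by
    have exp1 : ⟪L w₂ - f₂, L (w₁ - w₂)⟫ - ⟪L w₁ - f₁, L (w₁ - w₂)⟫
        = ⟪f₁ - f₂, L (w₁ - w₂)⟫ - ⟪L (w₁ - w₂), L (w₁ - w₂)⟫ := by
      simp only [inner_sub_left, map_sub]
      ring
    have exp2 : ⟪w₂, w₁ - w₂⟫ - ⟪w₁, w₁ - w₂⟫ = -⟪w₁ - w₂, w₁ - w₂⟫ := by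
      simp only [inner_sub_left]
      ring
    nlinarith
  have hyoung : 2 * ⟪f₁ - f₂, L (w₁ - w₂)⟫ ≤ ‖f₁ - f₂‖ ^ 2 + ‖L (w₁ - w₂)‖ ^ 2 := by
    nlinarith [norm_nonneg (f₁ - f₂), norm_nonneg (L (w₁ - w₂)),
      sq_nonneg (‖f₁ - f₂‖ - ‖L (w₁ - w₂)‖)]
  linarith
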